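/- arXiv:2507.06487 — 5 statements merged into one kernel-verified Lean document; each statement's English description precedes it below -/
import Mathlib

section
/- Let φ : ℝ → ℝ be smooth with all derivatives bounded, let f : ℝ → ℝ be a Schwartz function, and set u := f − f''. Then ∫_ℝ φ'(x) u(x)² dx = ∫_ℝ φ'(x) ( f(x)² + 2 f'(x)² + f''(x)² ) dx − ∫_ℝ φ'''(x) f(x)² dx. -/
open MeasureTheory ContDiff

/-- A Schwartz function is bounded. -/
lemma schwartz_bdd (g : SchwartzMap ℝ ℝ) : ∃ C : ℝ, ∀ x, ‖g x‖ ≤ C := by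
  obtain ⟨C, -, hC⟩ := g.decay 0 0
  exact ⟨C, fun x => by simpa [norm_iteratedFDeriv_zero] using hC x⟩

/-- bounded × Schwartz × Schwartz is integrable. -/
lemma int_bdd_mul (ψ : ℝ → ℝ) (hψc : Continuous ψ) (hψb : ∃ M, ∀ x, |ψ x| ≤ M)
    (g h : SchwartzMap ℝ ℝ) : Integrable (fun x => ψ x * (g x * h x)) := by
  have hgh : Integrable (fun x => g x * h x) :=
    h.integrable.bdd_mul g.continuous.aestronglyMeasurable
      (ae_of_all _ (schwartz_bdd g).choose_spec)
  obtain ⟨M, hM⟩ := hψb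
  exact hgh.bdd_mul hψc.aestronglyMeasurable
    (ae_of_all _ fun x => by simpa [Real.norm_eq_abs] using hM x)

/-- Integration by parts against a bounded smooth function. -/
lemma ibp_aux (ψ : ℝ → ℝ) (hψ : ContDiff ℝ ∞ ψ)
    (v v' : ℝ → ℝ) (hv : ∀ x, HasDerivAt v (v' x) x)
    (h1 : Integrable (fun x => ψ x * v' x))
    (h2 : Integrable (fun x => deriv ψ x * v x))
    (h3 : Integrable (fun x => ψ x * v x)) :
    ∫ x, ψ x * v' x = - ∫ x, deriv ψ x * v x :=
  integral_mul_deriv_eq_deriv_mul_of_integrable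
    (fun x _ => ((hψ.differentiable (by norm_num)) x).hasDerivAt) (fun x _ => hv x) h1 h2 h3

/-- For smooth `φ` with all derivatives bounded, Schwartz `f` and
`u := f - f''`, one has
`∫ φ' u² = ∫ φ' (f² + 2 f'² + f''²) - ∫ φ''' f²`. -/
theorem stmt_0 (φ : ℝ → ℝ) (hφ : ContDiff ℝ (⊤ : ℕ∞) φ)
    (hφbd : ∀ n : ℕ, ∃ M : ℝ, ∀ x : ℝ, |iteratedDeriv n φ x| ≤ M)
    (f : SchwartzMap ℝ ℝ) (u : ℝ → ℝ)
    (hu : ∀ x : ℝ, u x = f x - deriv (deriv ⇑f) x) :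
    ∫ x : ℝ, deriv φ x * (u x) ^ 2 =
      (∫ x : ℝ, deriv φ x *
        ((f x) ^ 2 + 2 * (deriv ⇑f x) ^ 2 + (deriv (deriv ⇑f) x) ^ 2))
      - ∫ x : ℝ, deriv (deriv (deriv φ)) x * (f x) ^ 2 := by
  classical
  -- Schwartz derivatives
  set f1 : SchwartzMap ℝ ℝ := SchwartzMap.derivCLM ℝ ℝ f with hf1def
  set f2 : SchwartzMap ℝ ℝ := SchwartzMap.derivCLM ℝ ℝ f1 with hf2def
  have hf1' : deriv (⇑f) = ⇑f1 := funext fun x => (SchwartzMap.derivCLM_apply (𝕜 := ℝ) f x).symm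
  have hf2' : deriv (deriv ⇑f) = ⇑f2 := by
    rw [hf1']; exact funext fun x => (SchwartzMap.derivCLM_apply (𝕜 := ℝ) f1 x).symm
  have hder : ∀ (g : SchwartzMap ℝ ℝ) (x : ℝ),
      HasDerivAt (⇑g) (SchwartzMap.derivCLM ℝ ℝ g x) x := by
    intro g x
    rw [SchwartzMap.derivCLM_apply]
    exact ((g.smooth 1).differentiable (by norm_num) x).hasDerivAt
  have hdf : ∀ x, HasDerivAt (⇑f) (f1 x) x := fun x => hder f x
  have hdf1 : ∀ x, HasDerivAt (⇑f1) (f2 x) x := fun x => hder f1 x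
  -- smoothness of derivatives of φ
  have hφ0 : ContDiff ℝ ∞ φ := hφ.of_le (by simp)
  have hφ1 : ContDiff ℝ ∞ (deriv φ) := (contDiff_infty_iff_deriv.mp hφ0).2
  have hφ2 : ContDiff ℝ ∞ (deriv (deriv φ)) := (contDiff_infty_iff_deriv.mp hφ1).2
  have hφ3 : ContDiff ℝ ∞ (deriv (deriv (deriv φ))) := (contDiff_infty_iff_deriv.mp hφ2).2
  -- boundedness of derivatives of φ
  have hi1 : iteratedDeriv 1 φ = deriv φ := by simp [iteratedDeriv_one]
  have hi2 : iteratedDeriv 2 φ = deriv (deriv φ) := by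
    rw [iteratedDeriv_succ, hi1]
  have hi3 : iteratedDeriv 3 φ = deriv (deriv (deriv φ)) := by
    rw [iteratedDeriv_succ, hi2]
  have hb1 : ∃ M, ∀ x, |deriv φ x| ≤ M := by
    obtain ⟨M, hM⟩ := hφbd 1; exact ⟨M, fun x => by rw [← hi1]; exact hM x⟩
  have hb2 : ∃ M, ∀ x, |deriv (deriv φ) x| ≤ M := by
    obtain ⟨M, hM⟩ := hφbd 2; exact ⟨M, fun x => by rw [← hi2]; exact hM x⟩
  have hb3 : ∃ M, ∀ x, |deriv (deriv (deriv φ)) x| ≤ M := by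
    obtain ⟨M, hM⟩ := hφbd 3; exact ⟨M, fun x => by rw [← hi3]; exact hM x⟩
  -- integrability of all products we need
  have K1 := fun g h => int_bdd_mul (deriv φ) hφ1.continuous hb1 g h
  have K2 := fun g h => int_bdd_mul (deriv (deriv φ)) hφ2.continuous hb2 g h
  have K3 := fun g h => int_bdd_mul (deriv (deriv (deriv φ))) hφ3.continuous hb3 g h
  -- the functions w = f², v = w' and their derivatives
  set v : ℝ → ℝ := fun x => f1 x * f x + f x * f1 x with hv
  set v' : ℝ → ℝ := fun x => (f2 x * f x + f1 x * f1 x) + (f1 x * f1 x + f x * f2 x)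
    with hv'
  have hvd : ∀ x, HasDerivAt v (v' x) x := fun x =>
    ((hdf1 x).mul (hdf x)).add ((hdf x).mul (hdf1 x))
  have hwd : ∀ x, HasDerivAt (fun x => f x * f x) (v x) x := fun x =>
    (hdf x).mul (hdf x)
  -- integrabilities for the two integrations by parts
  have Iv' : Integrable (fun x => deriv φ x * v' x) := by
    have : (fun x => deriv φ x * v' x) =
        fun x => (deriv φ x * (f2 x * f x) + deriv φ x * (f1 x * f1 x))
          + (deriv φ x * (f1 x * f1 x) + deriv φ x * (f x * f2 x)) := by
      funext x; simp only [hv']; ring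
    rw [this]
    exact ((K1 f2 f).add (K1 f1 f1)).add ((K1 f1 f1).add (K1 f f2))
  have I2v : Integrable (fun x => deriv (deriv φ) x * v x) := by
    have : (fun x => deriv (deriv φ) x * v x) =
        fun x => deriv (deriv φ) x * (f1 x * f x) + deriv (deriv φ) x * (f x * f1 x) := by
      funext x; simp only [hv]; ring
    rw [this]
    exact (K2 f1 f).add (K2 f f1)
  have I1v : Integrable (fun x => deriv φ x * v x) := by
    have : (fun x => deriv φ x * v x) =
        fun x => deriv φ x * (f1 x * f x) + deriv φ x * (f x * f1 x) := by
      funext x; simp only [hv]; ring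
    rw [this]
    exact (K1 f1 f).add (K1 f f1)
  have I2w : Integrable (fun x => deriv (deriv φ) x * (f x * f x)) := K2 f f
  have I3w : Integrable (fun x => deriv (deriv (deriv φ)) x * (f x * f x)) := K3 f f
  -- two integrations by parts
  have A1 : ∫ x, deriv φ x * v' x = - ∫ x, deriv (deriv φ) x * v x :=
    ibp_aux (deriv φ) hφ1 v v' hvd Iv' I2v I1v
  have A2 : ∫ x, deriv (deriv φ) x * v x
      = - ∫ x, deriv (deriv (deriv φ)) x * (f x * f x) :=
    ibp_aux (deriv (deriv φ)) hφ2 (fun x => f x * f x) v hwd I2v I3w I2w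
  -- named integrals
  set Iff := ∫ x, deriv φ x * (f x * f x) with hIff
  set I11 := ∫ x, deriv φ x * (f1 x * f1 x) with hI11
  set I02 := ∫ x, deriv φ x * (f x * f2 x) with hI02
  set I22 := ∫ x, deriv φ x * (f2 x * f2 x) with hI22
  set J := ∫ x, deriv (deriv (deriv φ)) x * (f x * f x) with hJ
  -- key identity: 2 I11 + 2 I02 = J
  have hsym : (∫ x, deriv φ x * (f2 x * f x)) = I02 := by
    rw [hI02]; congr 1; funext x; ring
  have hEv' : ∫ x, deriv φ x * v' x = I02 + I11 + (I11 + I02) := by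
    have : (fun x => deriv φ x * v' x) =
        fun x => (deriv φ x * (f2 x * f x) + deriv φ x * (f1 x * f1 x))
          + (deriv φ x * (f1 x * f1 x) + deriv φ x * (f x * f2 x)) := by
      funext x; simp only [hv']; ring
    have e1 : Integrable (fun x => deriv φ x * (f2 x * f x) + deriv φ x * (f1 x * f1 x)) :=
      (K1 f2 f).add (K1 f1 f1)
    have e2 : Integrable (fun x => deriv φ x * (f1 x * f1 x) + deriv φ x * (f x * f2 x)) :=
      (K1 f1 f1).add (K1 f f2)
    rw [this, integral_add e1 e2,
      integral_add (K1 f2 f) (K1 f1 f1), integral_add (K1 f1 f1) (K1 f f2), hsym]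
  have key : I02 + I11 + (I11 + I02) = J := by
    rw [← hEv', A1, A2, neg_neg]
  -- expand the left-hand side
  have EL : ∫ x, deriv φ x * (u x) ^ 2 = Iff - (I02 + I02) + I22 := by
    have : (fun x => deriv φ x * (u x) ^ 2) =
        fun x => deriv φ x * (f x * f x)
          - (deriv φ x * (f x * f2 x) + deriv φ x * (f x * f2 x))
          + deriv φ x * (f2 x * f2 x) := by
      funext x
      rw [hu x, hf2']
      ring
    have e1 : Integrable (fun x => deriv φ x * (f x * f2 x) + deriv φ x * (f x * f2 x)) :=
      (K1 f f2).add (K1 f f2)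
    have e2 : Integrable (fun x => deriv φ x * (f x * f x)
        - (deriv φ x * (f x * f2 x) + deriv φ x * (f x * f2 x))) := (K1 f f).sub e1
    rw [this, integral_add e2 (K1 f2 f2), integral_sub (K1 f f) e1,
      integral_add (K1 f f2) (K1 f f2)]
  -- expand the first integral of the right-hand side
  have ER : (∫ x, deriv φ x *
        ((f x) ^ 2 + 2 * (deriv ⇑f x) ^ 2 + (deriv (deriv ⇑f) x) ^ 2))
      = Iff + (I11 + I11) + I22 := by
    have : (fun x => deriv φ x *
        ((f x) ^ 2 + 2 * (deriv ⇑f x) ^ 2 + (deriv (deriv ⇑f) x) ^ 2)) =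
        fun x => (deriv φ x * (f x * f x)
          + (deriv φ x * (f1 x * f1 x) + deriv φ x * (f1 x * f1 x)))
          + deriv φ x * (f2 x * f2 x) := by
      funext x
      rw [hf2', hf1']
      ring
    have e1 : Integrable (fun x => deriv φ x * (f1 x * f1 x) + deriv φ x * (f1 x * f1 x)) :=
      (K1 f1 f1).add (K1 f1 f1)
    have e2 : Integrable (fun x => deriv φ x * (f x * f x)
        + (deriv φ x * (f1 x * f1 x) + deriv φ x * (f1 x * f1 x))) := (K1 f f).add e1
    rw [this, integral_add e2 (K1 f2 f2), integral_add (K1 f f) e1,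
      integral_add (K1 f1 f1) (K1 f1 f1)]
  -- expand the last integral of the right-hand side
  have EJ : (∫ x, deriv (deriv (deriv φ)) x * (f x) ^ 2) = J := by
    rw [hJ]; congr 1; funext x; ring
  rw [EL, ER, EJ]
  linarith [key]
end

section
/- Let φ : ℝ → ℝ be smooth with all derivatives bounded, let f : ℝ → ℝ be a Schwartz function, and set u := f − f''. Then ∫_ℝ φ'(x) u(x) f(x) dx = ∫_ℝ φ'(x) ( f(x)² + f'(x)² ) dx − (1/2) ∫_ℝ φ'''(x) f(x)² dx. -/
open MeasureTheory Filter

private lemma aux_integrable (g : ℝ → ℝ) (hg : Continuous g) (M : ℝ)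
    (hM : ∀ x, |g x| ≤ M) (p q : SchwartzMap ℝ ℝ) :
    Integrable (fun x => g x * (p x * q x)) := by
  have h1 : Integrable (fun x => p x * q x) :=
    (q.integrable).bdd_mul p.continuous.aestronglyMeasurable
      (Filter.Eventually.of_forall fun x => SchwartzMap.norm_le_seminorm ℝ p x)
  exact h1.bdd_mul hg.aestronglyMeasurable (c := M) (Filter.Eventually.of_forall fun x => (Real.norm_eq_abs _).symm ▸ hM x)

/-- For smooth `φ` with all derivatives bounded, Schwartz `f` and
`u := f - f''`, one has
`∫ φ' u f = ∫ φ' (f² + f'²) - (1/2) ∫ φ''' f²`. -/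
theorem stmt_1 (φ : ℝ → ℝ) (hφ : ContDiff ℝ (⊤ : ℕ∞) φ)
    (hφbd : ∀ n : ℕ, ∃ M : ℝ, ∀ x : ℝ, |iteratedDeriv n φ x| ≤ M)
    (f : SchwartzMap ℝ ℝ) (u : ℝ → ℝ)
    (hu : ∀ x : ℝ, u x = f x - deriv (deriv ⇑f) x) :
    ∫ x : ℝ, deriv φ x * (u x * f x) =
      (∫ x : ℝ, deriv φ x * ((f x) ^ 2 + (deriv ⇑f x) ^ 2))
      - (1 / 2) * ∫ x : ℝ, deriv (deriv (deriv φ)) x * (f x) ^ 2 := by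
  -- Schwartz derivatives
  set f1 : SchwartzMap ℝ ℝ := SchwartzMap.derivCLM ℝ ℝ f with hf1def
  set f2 : SchwartzMap ℝ ℝ := SchwartzMap.derivCLM ℝ ℝ f1 with hf2def
  have hf1 : ⇑f1 = deriv ⇑f := funext fun x => SchwartzMap.derivCLM_apply ℝ f x
  have hf2 : ⇑f2 = deriv (deriv ⇑f) := by
    rw [← hf1]; exact funext fun x => SchwartzMap.derivCLM_apply ℝ f1 x
  -- smoothness of derivatives of φ
  have hφ0 : ContDiff ℝ (⊤ : ℕ∞) φ := hφ.of_le (by simp)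
  have hφ1 : ContDiff ℝ (⊤ : ℕ∞) (deriv φ) := (contDiff_infty_iff_deriv.mp hφ0).2
  have hφ2 : ContDiff ℝ (⊤ : ℕ∞) (deriv (deriv φ)) := (contDiff_infty_iff_deriv.mp hφ1).2
  have hφ3 : ContDiff ℝ (⊤ : ℕ∞) (deriv (deriv (deriv φ))) := (contDiff_infty_iff_deriv.mp hφ2).2
  -- bounds
  obtain ⟨M1, hM1⟩ := hφbd 1
  obtain ⟨M2, hM2⟩ := hφbd 2
  obtain ⟨M3, hM3⟩ := hφbd 3
  have e1 : iteratedDeriv 1 φ = deriv φ := iteratedDeriv_one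
  have e2 : iteratedDeriv 2 φ = deriv (deriv φ) := by
    rw [show (2 : ℕ) = 1 + 1 from rfl, iteratedDeriv_succ, e1]
  have e3 : iteratedDeriv 3 φ = deriv (deriv (deriv φ)) := by
    rw [show (3 : ℕ) = 2 + 1 from rfl, iteratedDeriv_succ, e2]
  rw [e1] at hM1; rw [e2] at hM2; rw [e3] at hM3
  -- integrabilities
  have intA : Integrable (fun x => deriv φ x * (u x * f x)) := by
    have h1 : Integrable (fun x => deriv φ x * (f x * f x)) :=
      aux_integrable _ hφ1.continuous M1 hM1 f f
    have h2 : Integrable (fun x => deriv φ x * (f2 x * f x)) :=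
      aux_integrable _ hφ1.continuous M1 hM1 f2 f
    have := h1.sub h2
    refine this.congr (Filter.Eventually.of_forall fun x => ?_)
    simp only [Pi.sub_apply, hu x, ← hf2]; ring
  have intB : Integrable (fun x => deriv φ x * ((f x) ^ 2 + (deriv ⇑f x) ^ 2)) := by
    have h1 : Integrable (fun x => deriv φ x * (f x * f x)) :=
      aux_integrable _ hφ1.continuous M1 hM1 f f
    have h2 : Integrable (fun x => deriv φ x * (f1 x * f1 x)) :=
      aux_integrable _ hφ1.continuous M1 hM1 f1 f1
    refine (h1.add h2).congr (Filter.Eventually.of_forall fun x => ?_)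
    simp only [Pi.add_apply, ← hf1]; ring
  have intC : Integrable (fun x => deriv (deriv (deriv φ)) x * (f x) ^ 2) := by
    have h1 : Integrable (fun x => deriv (deriv (deriv φ)) x * (f x * f x)) :=
      aux_integrable _ hφ3.continuous M3 hM3 f f
    refine h1.congr (Filter.Eventually.of_forall fun x => ?_); ring
  -- the antiderivative
  set h : ℝ → ℝ := fun x => -(deriv φ x * (f x * f1 x)) + (1/2) * (deriv (deriv φ) x * (f x) ^ 2)
    with hhdef
  set G : ℝ → ℝ := fun x =>
      deriv φ x * (u x * f x) - deriv φ x * ((f x) ^ 2 + (deriv ⇑f x) ^ 2)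
      + (1/2) * (deriv (deriv (deriv φ)) x * (f x) ^ 2) with hGdef
  have hderiv : ∀ x, HasDerivAt h (G x) x := by
    intro x
    have dφ1 : HasDerivAt (deriv φ) (deriv (deriv φ) x) x :=
      ((hφ1.differentiable (by simp)) x).hasDerivAt
    have dφ2 : HasDerivAt (deriv (deriv φ)) (deriv (deriv (deriv φ)) x) x :=
      ((hφ2.differentiable (by simp)) x).hasDerivAt
    have df : HasDerivAt (⇑f) (f1 x) x := by
      rw [hf1]; exact f.differentiableAt.hasDerivAt
    have df1 : HasDerivAt (⇑f1) (f2 x) x := by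
      rw [hf2, ← hf1]; exact f1.differentiableAt.hasDerivAt
    have hd : HasDerivAt h
        (-(deriv (deriv φ) x * (f x * f1 x) + deriv φ x * (f1 x * f1 x + f x * f2 x))
          + (1/2) * (deriv (deriv (deriv φ)) x * (f x) ^ 2
            + deriv (deriv φ) x * (2 * f x ^ 1 * f1 x))) x := by
      exact ((dφ1.mul (df.mul df1)).neg).add
        (((dφ2.mul ((df.pow 2)))).const_mul (1/2))
    convert hd using 1
    simp only [hGdef, hu x, hf1, hf2]; ring
  have hint : Integrable G := (intA.sub intB).add (intC.const_mul (1/2))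
  -- limits of h at infinity
  have hlim : Filter.Tendsto h (Filter.cocompact ℝ) (nhds 0) := by
    have hf0 : Filter.Tendsto (⇑f) (Filter.cocompact ℝ) (nhds 0) := zero_at_infty f
    have hf10 : Filter.Tendsto (⇑f1) (Filter.cocompact ℝ) (nhds 0) := zero_at_infty f1
    have hg : Filter.Tendsto
        (fun x => |M1| * (|f x| * |f1 x|) + (1/2) * (|M2| * (|f x| * |f x|)))
        (Filter.cocompact ℝ) (nhds 0) := by
      have h1 := ((hf0.abs.mul hf10.abs).const_mul |M1|)
      have h2 := ((hf0.abs.mul hf0.abs).const_mul |M2|).const_mul (1/2)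
      simpa using h1.add h2
    refine squeeze_zero_norm (fun x => ?_) hg
    have b1 : |deriv φ x| ≤ |M1| := (hM1 x).trans (le_abs_self M1)
    have b2 : |deriv (deriv φ) x| ≤ |M2| := (hM2 x).trans (le_abs_self M2)
    have : ‖h x‖ ≤ |deriv φ x * (f x * f1 x)| + |(1/2) * (deriv (deriv φ) x * (f x) ^ 2)| := by
      rw [hhdef]
      calc |-(deriv φ x * (f x * f1 x)) + (1/2) * (deriv (deriv φ) x * (f x) ^ 2)|
          ≤ |-(deriv φ x * (f x * f1 x))| + |(1/2) * (deriv (deriv φ) x * (f x) ^ 2)| :=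
            abs_add_le _ _
        _ = _ := by rw [abs_neg]
    refine this.trans ?_
    rw [abs_mul, abs_mul, abs_mul, abs_mul,
      show |f x ^ 2| = |f x| * |f x| by rw [sq, abs_mul],
      show |(1:ℝ)/2| = 1/2 by norm_num]
    gcongr
  have htop : Filter.Tendsto h Filter.atTop (nhds 0) := hlim.mono_left atTop_le_cocompact
  have hbot : Filter.Tendsto h Filter.atBot (nhds 0) := hlim.mono_left atBot_le_cocompact
  -- FTC on both halves
  have key : ∫ x : ℝ, G x = 0 := by
    rw [← intervalIntegral.integral_Iic_add_Ioi (b := 0) hint.integrableOn hint.integrableOn,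
      integral_Iic_of_hasDerivAt_of_tendsto' (fun x _ => hderiv x) hint.integrableOn hbot,
      integral_Ioi_of_hasDerivAt_of_tendsto' (fun x _ => hderiv x) hint.integrableOn htop]
    ring
  have expand : ∫ x : ℝ, G x =
      (∫ x : ℝ, deriv φ x * (u x * f x))
      - (∫ x : ℝ, deriv φ x * ((f x) ^ 2 + (deriv ⇑f x) ^ 2))
      + (1/2) * ∫ x : ℝ, deriv (deriv (deriv φ)) x * (f x) ^ 2 := by
    rw [hGdef]
    rw [integral_add
        (f := fun x => deriv φ x * (u x * f x) - deriv φ x * ((f x) ^ 2 + (deriv ⇑f x) ^ 2))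
        (g := fun x => (1/2) * (deriv (deriv (deriv φ)) x * (f x) ^ 2))
        (by exact intA.sub intB) (by exact intC.const_mul (1/2)),
      integral_sub intA intB, integral_const_mul]
  rw [expand] at key
  linarith
end

section
/- Let a₁, a₂, a₃ > 0. There exists λ₀ > 0 depending on a₁, a₂, a₃ such that for every 0 < λ ≤ λ₀ there exist constants c₁, C₁ > 0 (depending on a₁, a₂, a₃ and λ) with the following property: for every smooth, bounded, strictly positive weight φ : ℝ → ℝ satisfying |φ''(x)| ≤ λ φ(x) for all x, and every Schwartz function f with u := f − f'', one has c₁ ∫_ℝ φ u² ≤ ∫_ℝ φ ( a₁ f² + a₂ (f')² + a₃ (f'')² ) ≤ C₁ ∫_ℝ φ u². -/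
open MeasureTheory Filter Set
open scoped ContDiff

namespace Stmt2Aux

lemma sbound (g : SchwartzMap ℝ ℝ) (k : ℕ) : ∃ C : ℝ, 0 ≤ C ∧ ∀ x : ℝ, |x| ^ k * |g x| ≤ C := by
  obtain ⟨C, hC0, hC⟩ := g.decay k 0
  refine ⟨C, hC0.le, fun x => ?_⟩
  simpa [Real.norm_eq_abs] using hC x

lemma integrable_poly1_mul (g : SchwartzMap ℝ ℝ) :
    Integrable (fun x : ℝ => (1 + |x|) * |g x|) := by
  have h0 : Integrable (fun x : ℝ => |g x|) := by
    simpa [Real.norm_eq_abs] using g.integrable (μ := volume) |>.norm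
  have h1 : Integrable (fun x : ℝ => |x| * |g x|) := by
    simpa [Real.norm_eq_abs] using g.integrable_pow_mul volume 1
  exact (h0.add h1).congr (Eventually.of_forall fun x => by simp only [Pi.add_apply]; ring)

lemma integrable_wgh (w : ℝ → ℝ) (hw : Continuous w) (A : ℝ)
    (hA : ∀ x, |w x| ≤ A * (1 + |x|)) (g h : SchwartzMap ℝ ℝ) :
    Integrable (fun x : ℝ => w x * (g x * h x)) := by
  have hA0 : 0 ≤ A := by
    have h1 := (abs_nonneg (w 0)).trans (hA 0)
    simpa using h1
  obtain ⟨C, hC0, hC⟩ := sbound g 0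
  have hint : Integrable (fun x : ℝ => A * C * ((1 + |x|) * |h x|)) :=
    (integrable_poly1_mul h).const_mul _
  refine hint.mono ?_ ?_
  · exact (hw.mul (g.continuous.mul h.continuous)).aestronglyMeasurable
  · refine Eventually.of_forall fun x => ?_
    have e0 : |g x| ≤ C := by simpa using hC x
    have e1 := hA x
    have hx : (0:ℝ) ≤ 1 + |x| := by positivity
    rw [Real.norm_eq_abs, Real.norm_eq_abs, abs_mul, abs_mul]
    have hrhs : |A * C * ((1 + |x|) * |h x|)| = A * C * ((1 + |x|) * |h x|) :=
      abs_of_nonneg (by positivity)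
    rw [hrhs]
    nlinarith [abs_nonneg (g x), abs_nonneg (h x), abs_nonneg (w x),
      mul_le_mul e1 e0 (abs_nonneg (g x)) (by positivity : (0:ℝ) ≤ A * (1 + |x|)),
      mul_nonneg (mul_nonneg hA0 hx) (mul_nonneg hC0 (abs_nonneg (h x)))]

lemma tendsto_aux (g h : SchwartzMap ℝ ℝ) {l : Filter ℝ}
    (hl : Tendsto (fun x : ℝ => |x|) l atTop) :
    Tendsto (fun x : ℝ => (1 + |x|) * |g x * h x|) l (nhds 0) := by
  obtain ⟨C0, hC00, hC0⟩ := sbound g 0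
  obtain ⟨C1, hC10, hC1⟩ := sbound h 1
  obtain ⟨C2, hC20, hC2⟩ := sbound h 2
  apply squeeze_zero_norm' (a := fun x : ℝ => (C0 * (C1 + C2)) / |x|)
  · filter_upwards [hl.eventually_ge_atTop 1] with x hx
    have hx0 : (0:ℝ) < |x| := lt_of_lt_of_le one_pos hx
    have e0 : |g x| ≤ C0 := by simpa using hC0 x
    have e1 : |x| * |h x| ≤ C1 := by simpa using hC1 x
    have e2 : |x| ^ 2 * |h x| ≤ C2 := by simpa using hC2 x
    rw [Real.norm_eq_abs, abs_of_nonneg (by positivity), le_div_iff₀ hx0, abs_mul]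
    nlinarith [abs_nonneg (g x), abs_nonneg (h x),
      mul_le_mul e0 e1 (by positivity) hC00,
      mul_le_mul e0 e2 (by positivity) hC00]
  · exact Tendsto.div_atTop tendsto_const_nhds hl

lemma deriv_growth (φ : ℝ → ℝ) (hφ₀ : ContDiff ℝ (⊤ : ℕ∞) φ) (K : ℝ)
    (hK : ∀ x, |deriv (deriv φ) x| ≤ K) :
    ∀ x, |deriv φ x| ≤ (|deriv φ 0| + K) * (1 + |x|) := by
  have hφ : ContDiff ℝ ∞ φ := hφ₀.of_le (by simp)
  have hφ1 : ContDiff ℝ ∞ (deriv φ) := (contDiff_infty_iff_deriv.mp hφ).2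
  have hd1 : Differentiable ℝ (deriv φ) := (contDiff_infty_iff_deriv.mp hφ1).1
  have hc2 : Continuous (deriv (deriv φ)) :=
    ((contDiff_infty_iff_deriv.mp hφ1).2).continuous
  have hK0 : 0 ≤ K := le_trans (abs_nonneg _) (hK 0)
  intro x
  have hftc : ∫ t in (0:ℝ)..x, deriv (deriv φ) t = deriv φ x - deriv φ 0 :=
    intervalIntegral.integral_deriv_eq_sub (fun t _ => hd1 t)
      (hc2.intervalIntegrable 0 x)
  have hb : ‖∫ t in (0:ℝ)..x, deriv (deriv φ) t‖ ≤ K * |x - 0| :=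
    intervalIntegral.norm_integral_le_of_norm_le_const fun t _ => by
      simpa [Real.norm_eq_abs] using hK t
  rw [hftc, Real.norm_eq_abs, sub_zero] at hb
  have htri : |deriv φ x| ≤ |deriv φ 0| + |deriv φ x - deriv φ 0| := by
    have := abs_add_le (deriv φ 0) (deriv φ x - deriv φ 0)
    simpa using this
  nlinarith [abs_nonneg (deriv φ 0), abs_nonneg x]

lemma final_lower (a₁ a₂ a₃ lam X0 X1 X2 XJ : ℝ) (ha₁ : 0 < a₁) (ha₂ : 0 < a₂) (ha₃ : 0 < a₃)
    (hlam : 0 < lam) (hlam2 : lam ≤ 1/2) (hX0 : 0 ≤ X0) (hX1 : 0 ≤ X1) (hX2 : 0 ≤ X2)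
    (hJ1 : -(lam * X0) ≤ XJ) (hJ2 : XJ ≤ lam * X0) :
    min a₁ (min a₂ a₃) / 2 * (X0 - 2 * ((1/2) * XJ - X1) + X2) ≤ a₁ * X0 + a₂ * X1 + a₃ * X2 := by
  have hm0 : 0 < min a₁ (min a₂ a₃) := lt_min ha₁ (lt_min ha₂ ha₃)
  have hma1 : min a₁ (min a₂ a₃) ≤ a₁ := min_le_left _ _
  have hma2 : min a₁ (min a₂ a₃) ≤ a₂ := le_trans (min_le_right _ _) (min_le_left _ _)
  have hma3 : min a₁ (min a₂ a₃) ≤ a₃ := le_trans (min_le_right _ _) (min_le_right _ _)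
  nlinarith [mul_le_mul_of_nonneg_right hma1 hX0, mul_le_mul_of_nonneg_right hma2 hX1,
    mul_le_mul_of_nonneg_right hma3 hX2,
    mul_le_mul_of_nonneg_left hJ1 hm0.le,
    mul_le_mul_of_nonneg_left (mul_le_mul_of_nonneg_right hlam2 hX0) hm0.le,
    mul_nonneg hm0.le hX0, mul_nonneg hm0.le hX1, mul_nonneg hm0.le hX2]

lemma final_upper (a₁ a₂ a₃ lam X0 X1 X2 XJ : ℝ) (ha₁ : 0 < a₁) (ha₂ : 0 < a₂) (ha₃ : 0 < a₃)
    (hlam : 0 < lam) (hlam2 : lam ≤ 1/2) (hX0 : 0 ≤ X0) (hX1 : 0 ≤ X1) (hX2 : 0 ≤ X2)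
    (hJ1 : -(lam * X0) ≤ XJ) (hJ2 : XJ ≤ lam * X0) :
    a₁ * X0 + a₂ * X1 + a₃ * X2 ≤
      2 * max a₁ (max a₂ a₃) * (X0 - 2 * ((1/2) * XJ - X1) + X2) := by
  have hMa0 : 0 < max a₁ (max a₂ a₃) := lt_of_lt_of_le ha₁ (le_max_left _ _)
  have hMa1 : a₁ ≤ max a₁ (max a₂ a₃) := le_max_left _ _
  have hMa2 : a₂ ≤ max a₁ (max a₂ a₃) := le_trans (le_max_left _ _) (le_max_right _ _)
  have hMa3 : a₃ ≤ max a₁ (max a₂ a₃) := le_trans (le_max_right _ _) (le_max_right _ _)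
  nlinarith [mul_le_mul_of_nonneg_right hMa1 hX0, mul_le_mul_of_nonneg_right hMa2 hX1,
    mul_le_mul_of_nonneg_right hMa3 hX2,
    mul_le_mul_of_nonneg_left hJ2 hMa0.le,
    mul_le_mul_of_nonneg_left (mul_le_mul_of_nonneg_right hlam2 hX0) hMa0.le,
    mul_nonneg hMa0.le hX0, mul_nonneg hMa0.le hX1, mul_nonneg hMa0.le hX2]

end Stmt2Aux

/-- Equivalence of the weighted `L²` norm of `u = f - f''` with the
weighted quadratic form in the canonical variable `f`, for weights with small
relative second derivative. -/
theorem stmt_2 (a₁ a₂ a₃ : ℝ) (ha₁ : 0 < a₁) (ha₂ : 0 < a₂) (ha₃ : 0 < a₃) :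
    ∃ lam₀ : ℝ, 0 < lam₀ ∧ ∀ lam : ℝ, 0 < lam → lam ≤ lam₀ →
      ∃ c₁ : ℝ, 0 < c₁ ∧ ∃ C₁ : ℝ, 0 < C₁ ∧
        ∀ φ : ℝ → ℝ, ContDiff ℝ (⊤ : ℕ∞) φ → (∃ M : ℝ, ∀ x : ℝ, |φ x| ≤ M) →
          (∀ x : ℝ, 0 < φ x) →
          (∀ x : ℝ, |deriv (deriv φ) x| ≤ lam * φ x) →
          ∀ (f : SchwartzMap ℝ ℝ) (u : ℝ → ℝ),
            (∀ x : ℝ, u x = f x - deriv (deriv ⇑f) x) →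
            (c₁ * ∫ x : ℝ, φ x * (u x) ^ 2 ≤
              ∫ x : ℝ, φ x * (a₁ * (f x) ^ 2 + a₂ * (deriv ⇑f x) ^ 2
                + a₃ * (deriv (deriv ⇑f) x) ^ 2)) ∧
            ((∫ x : ℝ, φ x * (a₁ * (f x) ^ 2 + a₂ * (deriv ⇑f x) ^ 2
                + a₃ * (deriv (deriv ⇑f) x) ^ 2)) ≤
              C₁ * ∫ x : ℝ, φ x * (u x) ^ 2) := by
  have hm0 : 0 < min a₁ (min a₂ a₃) := lt_min ha₁ (lt_min ha₂ ha₃)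
  have hMa0 : 0 < max a₁ (max a₂ a₃) := lt_of_lt_of_le ha₁ (le_max_left _ _)
  refine ⟨1/2, by norm_num, fun lam hlam hlam2 => ?_⟩
  refine ⟨min a₁ (min a₂ a₃) / 2, by positivity, 2 * max a₁ (max a₂ a₃), by positivity,
    fun φ hφsm hφbdd hφpos hφ'' f u hu => ?_⟩
  obtain ⟨M, hM⟩ := hφbdd
  have hM0 : 0 ≤ M := le_trans (abs_nonneg _) (hM 0)
  -- Schwartz derivatives
  set g1 : SchwartzMap ℝ ℝ := SchwartzMap.derivCLM ℝ ℝ f with hg1def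
  set g2 : SchwartzMap ℝ ℝ := SchwartzMap.derivCLM ℝ ℝ g1 with hg2def
  have e1 : ⇑g1 = deriv ⇑f := funext fun x => SchwartzMap.derivCLM_apply (𝕜 := ℝ) f x
  have e2 : ⇑g2 = deriv (deriv ⇑f) := by
    rw [show ⇑g2 = deriv ⇑g1 from funext fun x => SchwartzMap.derivCLM_apply (𝕜 := ℝ) g1 x, e1]
  -- smoothness of φ
  have hphiI : ContDiff ℝ ∞ φ := hφsm.of_le (by simp)
  have hφ1 : ContDiff ℝ ∞ (deriv φ) := (contDiff_infty_iff_deriv.mp hphiI).2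
  have hφdiff : Differentiable ℝ φ := (contDiff_infty_iff_deriv.mp hphiI).1
  have hφ'diff : Differentiable ℝ (deriv φ) := (contDiff_infty_iff_deriv.mp hφ1).1
  have hφc : Continuous φ := hphiI.continuous
  have hφ''c : Continuous (deriv (deriv φ)) := ((contDiff_infty_iff_deriv.mp hφ1).2).continuous
  -- bounds on weights
  have hφbd : ∀ x, |φ x| ≤ M * (1 + |x|) := fun x => (hM x).trans (by nlinarith [abs_nonneg x])
  have hφ''K : ∀ x, |deriv (deriv φ) x| ≤ lam * M := fun x => by
    have h1 := hφ'' x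
    have h2 : φ x ≤ M := le_trans (le_abs_self _) (hM x)
    nlinarith [hφpos x]
  have hφ'bd : ∀ x, |deriv φ x| ≤ (|deriv φ 0| + lam * M) * (1 + |x|) :=
    Stmt2Aux.deriv_growth φ hφsm _ hφ''K
  have hφ''bd : ∀ x, |deriv (deriv φ) x| ≤ (lam * M) * (1 + |x|) := fun x => by
    have := hφ''K x
    nlinarith [abs_nonneg x, abs_nonneg (deriv (deriv φ) x)]
  have hA0 : 0 ≤ |deriv φ 0| + lam * M := by positivity
  -- integrability
  have iI0 := Stmt2Aux.integrable_wgh φ hφc M hφbd f f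
  have iI1 := Stmt2Aux.integrable_wgh φ hφc M hφbd g1 g1
  have iI2 := Stmt2Aux.integrable_wgh φ hφc M hφbd g2 g2
  have iP := Stmt2Aux.integrable_wgh φ hφc M hφbd f g2
  have iJ := Stmt2Aux.integrable_wgh _ hφ''c (lam * M) hφ''bd f f
  -- the boundary function and its derivative
  have hG : ∀ x : ℝ, HasDerivAt (fun y => φ y * (f y * g1 y) - (1/2) * (deriv φ y * (f y * f y)))
      (φ x * (g1 x * g1 x) + φ x * (f x * g2 x)
        - (1/2) * (deriv (deriv φ) x * (f x * f x))) x := by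
    intro x
    have hφd : HasDerivAt φ (deriv φ x) x := (hφdiff x).hasDerivAt
    have hφ'd : HasDerivAt (deriv φ) (deriv (deriv φ) x) x := (hφ'diff x).hasDerivAt
    have hfd : HasDerivAt (⇑f) (g1 x) x := by
      have h := f.differentiableAt (x := x) |>.hasDerivAt
      rw [← e1] at h; exact h
    have hg1d : HasDerivAt (⇑g1) (g2 x) x := by
      have h := g1.differentiableAt (x := x) |>.hasDerivAt
      have e : deriv ⇑g1 x = g2 x := by
        rw [show ⇑g2 = deriv ⇑g1 from funext fun x => SchwartzMap.derivCLM_apply (𝕜 := ℝ) g1 x]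
      rw [e] at h; exact h
    have H := (hφd.mul (hfd.mul hg1d)).sub ((hφ'd.mul (hfd.mul hfd)).const_mul (1/2 : ℝ))
    exact H.congr_deriv (by simp only [Pi.mul_apply]; ring)
  have hG'int : Integrable (fun x : ℝ => φ x * (g1 x * g1 x) + φ x * (f x * g2 x)
      - (1/2) * (deriv (deriv φ) x * (f x * f x))) :=
    (iI1.add iP).sub (iJ.const_mul (1/2))
  -- decay of the boundary function
  have hGt : ∀ {l : Filter ℝ}, Tendsto (fun x : ℝ => |x|) l atTop →
      Tendsto (fun y : ℝ => φ y * (f y * g1 y) - (1/2) * (deriv φ y * (f y * f y))) l (nhds 0) := by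
    intro l hl
    apply squeeze_zero_norm' (a := fun x : ℝ => M * ((1 + |x|) * |f x * g1 x|)
      + ((1/2) * (|deriv φ 0| + lam * M)) * ((1 + |x|) * |f x * f x|))
    · refine Eventually.of_forall fun x => ?_
      rw [Real.norm_eq_abs]
      have htri : |φ x * (f x * g1 x) - (1/2) * (deriv φ x * (f x * f x))| ≤
          |φ x * (f x * g1 x)| + |(1/2) * (deriv φ x * (f x * f x))| := by
        rw [sub_eq_add_neg]
        exact (abs_add_le _ _).trans (by rw [abs_neg])
      have hT1 : |φ x * (f x * g1 x)| ≤ M * ((1 + |x|) * |f x * g1 x|) := by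
        rw [abs_mul, ← mul_assoc]
        exact mul_le_mul_of_nonneg_right (hφbd x) (abs_nonneg _)
      have habs : |(1/2) * (deriv φ x * (f x * f x))|
          = (1/2) * (|deriv φ x| * |f x * f x|) := by
        rw [abs_mul, abs_mul, abs_of_nonneg (by norm_num : (0:ℝ) ≤ 1/2)]
      have b2 : |deriv φ x| * |f x * f x| ≤
          (|deriv φ 0| + lam * M) * ((1 + |x|) * |f x * f x|) := by
        rw [← mul_assoc]
        exact mul_le_mul_of_nonneg_right (hφ'bd x) (abs_nonneg _)
      have hT2 : |(1/2) * (deriv φ x * (f x * f x))| ≤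
          (1/2) * ((|deriv φ 0| + lam * M) * ((1 + |x|) * |f x * f x|)) := by
        rw [habs]
        exact mul_le_mul_of_nonneg_left b2 (by norm_num)
      have hgoal := htri.trans (add_le_add hT1 hT2)
      linarith [hgoal]
    · have h1 := (Stmt2Aux.tendsto_aux f g1 hl).const_mul M
      have h2 := (Stmt2Aux.tendsto_aux f f hl).const_mul ((1/2) * (|deriv φ 0| + lam * M))
      have := h1.add h2
      simpa using this
  -- integration by parts identity
  have hIBP : ∫ x : ℝ, (φ x * (g1 x * g1 x) + φ x * (f x * g2 x)
      - (1/2) * (deriv (deriv φ) x * (f x * f x))) = 0 := by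
    have h := integral_of_hasDerivAt_of_tendsto hG hG'int
      (hGt tendsto_abs_atBot_atTop) (hGt tendsto_abs_atTop_atTop)
    simpa using h
  have iS : Integrable (fun x : ℝ => φ x * (g1 x * g1 x) + φ x * (f x * g2 x)) volume :=
    iI1.add iP
  have iJ2 : Integrable (fun x : ℝ => (1/2 : ℝ) * (deriv (deriv φ) x * (f x * f x))) volume :=
    iJ.const_mul _
  have hIBP2 : (∫ x : ℝ, φ x * (g1 x * g1 x)) + (∫ x : ℝ, φ x * (f x * g2 x))
      - (1/2) * (∫ x : ℝ, deriv (deriv φ) x * (f x * f x)) = 0 := by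
    have h2 := integral_sub iS iJ2
    rw [integral_add iI1 iP, integral_const_mul] at h2
    rw [← h2]
    exact hIBP
  -- rewriting the two integrals of the statement
  have hU : (∫ x : ℝ, φ x * (u x) ^ 2) = (∫ x : ℝ, φ x * (f x * f x))
      - 2 * (∫ x : ℝ, φ x * (f x * g2 x)) + (∫ x : ℝ, φ x * (g2 x * g2 x)) := by
    have hfun : (fun x : ℝ => φ x * (u x) ^ 2) = fun x : ℝ =>
        (φ x * (f x * f x) - 2 * (φ x * (f x * g2 x))) + φ x * (g2 x * g2 x) := by
      funext x; rw [hu x, ← e2]; ring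
    have iP2 : Integrable (fun x : ℝ => (2:ℝ) * (φ x * (f x * g2 x))) volume := iP.const_mul _
    have iA : Integrable (fun x : ℝ => φ x * (f x * f x) - 2 * (φ x * (f x * g2 x))) volume :=
      iI0.sub iP2
    rw [hfun, integral_add iA iI2, integral_sub iI0 iP2, integral_const_mul]
  have hQ : (∫ x : ℝ, φ x * (a₁ * (f x) ^ 2 + a₂ * (deriv ⇑f x) ^ 2
        + a₃ * (deriv (deriv ⇑f) x) ^ 2))
      = a₁ * (∫ x : ℝ, φ x * (f x * f x)) + a₂ * (∫ x : ℝ, φ x * (g1 x * g1 x))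
        + a₃ * (∫ x : ℝ, φ x * (g2 x * g2 x)) := by
    have hfun : (fun x : ℝ => φ x * (a₁ * (f x) ^ 2 + a₂ * (deriv ⇑f x) ^ 2
        + a₃ * (deriv (deriv ⇑f) x) ^ 2)) = fun x : ℝ =>
        (a₁ * (φ x * (f x * f x)) + a₂ * (φ x * (g1 x * g1 x))) + a₃ * (φ x * (g2 x * g2 x)) := by
      funext x; rw [← e2, ← e1]; ring
    have i1 : Integrable (fun x : ℝ => a₁ * (φ x * (f x * f x))) volume := iI0.const_mul _
    have i2 : Integrable (fun x : ℝ => a₂ * (φ x * (g1 x * g1 x))) volume := iI1.const_mul _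
    have i3 : Integrable (fun x : ℝ => a₃ * (φ x * (g2 x * g2 x))) volume := iI2.const_mul _
    have i12 : Integrable (fun x : ℝ => a₁ * (φ x * (f x * f x))
        + a₂ * (φ x * (g1 x * g1 x))) volume := i1.add i2
    rw [hfun, integral_add i12 i3, integral_add i1 i2,
      integral_const_mul, integral_const_mul, integral_const_mul]
  -- bound on J
  have hJabs : |∫ x : ℝ, deriv (deriv φ) x * (f x * f x)| ≤
      lam * ∫ x : ℝ, φ x * (f x * f x) := by
    rw [← integral_const_mul]
    calc |∫ x : ℝ, deriv (deriv φ) x * (f x * f x)|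
        ≤ ∫ x : ℝ, |deriv (deriv φ) x * (f x * f x)| := by
          simpa only [Real.norm_eq_abs] using
            norm_integral_le_integral_norm (μ := volume)
              (fun x : ℝ => deriv (deriv φ) x * (f x * f x))
      _ ≤ ∫ x : ℝ, lam * (φ x * (f x * f x)) := by
          apply integral_mono iJ.abs (iI0.const_mul lam)
          intro x
          show |deriv (deriv φ) x * (f x * f x)| ≤ lam * (φ x * (f x * f x))
          rw [abs_mul, abs_of_nonneg (mul_self_nonneg (f x))]
          nlinarith [mul_le_mul_of_nonneg_right (hφ'' x) (mul_self_nonneg (f x))]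
  -- nonnegativity
  have hI0nn : 0 ≤ ∫ x : ℝ, φ x * (f x * f x) :=
    integral_nonneg fun x => mul_nonneg (hφpos x).le (mul_self_nonneg _)
  have hI1nn : 0 ≤ ∫ x : ℝ, φ x * (g1 x * g1 x) :=
    integral_nonneg fun x => mul_nonneg (hφpos x).le (mul_self_nonneg _)
  have hI2nn : 0 ≤ ∫ x : ℝ, φ x * (g2 x * g2 x) :=
    integral_nonneg fun x => mul_nonneg (hφpos x).le (mul_self_nonneg _)
  -- final arithmetic
  obtain ⟨hJ1, hJ2⟩ := abs_le.mp hJabs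
  have hP : (∫ x : ℝ, φ x * (f x * g2 x)) =
      (1/2) * (∫ x : ℝ, deriv (deriv φ) x * (f x * f x)) - (∫ x : ℝ, φ x * (g1 x * g1 x)) := by
    linarith [hIBP2]
  constructor
  · rw [hU, hP, hQ]
    exact Stmt2Aux.final_lower a₁ a₂ a₃ lam _ _ _ _ ha₁ ha₂ ha₃ hlam hlam2
      hI0nn hI1nn hI2nn hJ1 hJ2
  · rw [hU, hP, hQ]
    exact Stmt2Aux.final_upper a₁ a₂ a₃ lam _ _ _ _ ha₁ ha₂ ha₃ hlam hlam2
      hI0nn hI1nn hI2nn hJ1 hJ2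
end

section
/- Let d₁, d₂, d₃ > 0. There exists λ₀ > 0 depending on d₁, d₂, d₃ such that for every 0 < λ ≤ λ₀ there exist constants c₂, C₂ > 0 (depending on d₁, d₂, d₃ and λ) with the following property: for every smooth, bounded, strictly positive weight φ : ℝ → ℝ satisfying |φ''(x)| ≤ λ φ(x) for all x, and every Schwartz function f with u := f − f'', one has c₂ ∫_ℝ φ (u')² ≤ ∫_ℝ φ ( d₁ (f')² + d₂ (f'')² + d₃ (f''')² ) ≤ C₂ ∫_ℝ φ (u')². -/
open MeasureTheory Filter Topology


lemma my_integral_deriv_eq_zero {F F' : ℝ → ℝ} (hd : ∀ x, HasDerivAt F (F' x) x)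
    (hi : Integrable F') (ht : Tendsto F atTop (𝓝 0)) (hb : Tendsto F atBot (𝓝 0)) :
    ∫ x, F' x = 0 := by
  have h1 := integral_Iic_of_hasDerivAt_of_tendsto' (a := 0) (fun x _ => hd x)
    hi.integrableOn hb
  have h2 := integral_Ioi_of_hasDerivAt_of_tendsto' (a := 0) (fun x _ => hd x)
    hi.integrableOn ht
  rw [← intervalIntegral.integral_Iic_add_Ioi (b := 0) hi.integrableOn hi.integrableOn, h1, h2]
  ring

lemma my_arith1 (d₁ d₂ d₃ lam A B D E P : ℝ) (hd₁ : 0 < d₁) (hd₂ : 0 < d₂) (hd₃ : 0 < d₃)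
    (hlam : 0 < lam) (hlam2 : lam ≤ 1/2) (hA0 : 0 ≤ A) (hB0 : 0 ≤ B) (hD0 : 0 ≤ D)
    (hPabs : |P| ≤ lam * A) (hEval : E = P / 2 - B) :
    min (2*d₁/3) (min (d₂/2) d₃) * (A - 2 * E + D) ≤ d₁ * A + d₂ * B + d₃ * D := by
  have hPabs' := abs_le.mp hPabs
  have hlamA : lam * A ≤ 1/2 * A := mul_le_mul_of_nonneg_right hlam2 hA0
  have hc2a : min (2*d₁/3) (min (d₂/2) d₃) ≤ 2*d₁/3 := min_le_left _ _
  have hc2b : min (2*d₁/3) (min (d₂/2) d₃) ≤ d₂/2 :=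
    le_trans (min_le_right _ _) (min_le_left _ _)
  have hc2c : min (2*d₁/3) (min (d₂/2) d₃) ≤ d₃ :=
    le_trans (min_le_right _ _) (min_le_right _ _)
  have hc2pos : (0:ℝ) < min (2*d₁/3) (min (d₂/2) d₃) := by positivity
  have hIle : A - 2 * E + D ≤ 3/2*A + 2*B + D := by
    rw [hEval]; linarith [hPabs'.2]
  calc min (2*d₁/3) (min (d₂/2) d₃) * (A - 2 * E + D)
      ≤ min (2*d₁/3) (min (d₂/2) d₃) * (3/2*A + 2*B + D) :=
        mul_le_mul_of_nonneg_left hIle hc2pos.le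
    _ ≤ d₁ * A + d₂ * B + d₃ * D := by
        nlinarith [mul_le_mul_of_nonneg_right hc2a hA0,
          mul_le_mul_of_nonneg_right hc2b hB0, mul_le_mul_of_nonneg_right hc2c hD0]

lemma my_arith2 (d₁ d₂ d₃ lam A B D E P : ℝ) (hd₁ : 0 < d₁) (hd₂ : 0 < d₂) (hd₃ : 0 < d₃)
    (hlam : 0 < lam) (hlam2 : lam ≤ 1/2) (hA0 : 0 ≤ A) (hB0 : 0 ≤ B) (hD0 : 0 ≤ D)
    (hPabs : |P| ≤ lam * A) (hEval : E = P / 2 - B) :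
    d₁ * A + d₂ * B + d₃ * D ≤ max (2*d₁) (max d₂ d₃) * (A - 2 * E + D) := by
  have hPabs' := abs_le.mp hPabs
  have hlamA : lam * A ≤ 1/2 * A := mul_le_mul_of_nonneg_right hlam2 hA0
  have hC2a : 2*d₁ ≤ max (2*d₁) (max d₂ d₃) := le_max_left _ _
  have hC2b : d₂ ≤ max (2*d₁) (max d₂ d₃) :=
    le_trans (le_max_left _ _) (le_max_right _ _)
  have hC2c : d₃ ≤ max (2*d₁) (max d₂ d₃) :=
    le_trans (le_max_right _ _) (le_max_right _ _)
  have hC2pos : (0:ℝ) < max (2*d₁) (max d₂ d₃) :=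
    lt_of_lt_of_le (by linarith) (le_max_left _ _)
  have hIge : 1/2*A + 2*B + D ≤ A - 2 * E + D := by
    rw [hEval]; linarith [hPabs'.2]
  calc d₁ * A + d₂ * B + d₃ * D
      ≤ max (2*d₁) (max d₂ d₃) * (1/2*A + 2*B + D) := by
        nlinarith [mul_le_mul_of_nonneg_right hC2a hA0,
          mul_le_mul_of_nonneg_right hC2b hB0, mul_le_mul_of_nonneg_right hC2c hD0,
          mul_nonneg hC2pos.le hB0]
    _ ≤ max (2*d₁) (max d₂ d₃) * (A - 2 * E + D) :=
        mul_le_mul_of_nonneg_left hIge hC2pos.le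

/-- Equivalence of the weighted `L²` norm of `u' = (f - f'')'` with the
weighted quadratic form in the derivatives of the canonical variable `f`, for weights
with small relative second derivative. -/
theorem stmt_3 (d₁ d₂ d₃ : ℝ) (hd₁ : 0 < d₁) (hd₂ : 0 < d₂) (hd₃ : 0 < d₃) :
    ∃ lam₀ : ℝ, 0 < lam₀ ∧ ∀ lam : ℝ, 0 < lam → lam ≤ lam₀ →
      ∃ c₂ : ℝ, 0 < c₂ ∧ ∃ C₂ : ℝ, 0 < C₂ ∧
        ∀ φ : ℝ → ℝ, ContDiff ℝ (⊤ : ℕ∞) φ → (∃ M : ℝ, ∀ x : ℝ, |φ x| ≤ M) →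
          (∀ x : ℝ, 0 < φ x) →
          (∀ x : ℝ, |deriv (deriv φ) x| ≤ lam * φ x) →
          ∀ (f : SchwartzMap ℝ ℝ) (u : ℝ → ℝ),
            (∀ x : ℝ, u x = f x - deriv (deriv ⇑f) x) →
            (c₂ * ∫ x : ℝ, φ x * (deriv u x) ^ 2 ≤
              ∫ x : ℝ, φ x * (d₁ * (deriv ⇑f x) ^ 2 + d₂ * (deriv (deriv ⇑f) x) ^ 2
                + d₃ * (deriv (deriv (deriv ⇑f)) x) ^ 2)) ∧
            ((∫ x : ℝ, φ x * (d₁ * (deriv ⇑f x) ^ 2 + d₂ * (deriv (deriv ⇑f) x) ^ 2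
                + d₃ * (deriv (deriv (deriv ⇑f)) x) ^ 2)) ≤
              C₂ * ∫ x : ℝ, φ x * (deriv u x) ^ 2) := by
  refine ⟨1/2, by norm_num, fun lam hlam hlam2 => ?_⟩
  refine ⟨min (2*d₁/3) (min (d₂/2) d₃), by positivity,
    max (2*d₁) (max d₂ d₃), lt_of_lt_of_le (by linarith) (le_max_left _ _), ?_⟩
  rintro φ hφ ⟨M, hM⟩ hφpos hφ2b f u hu
  -- setup
  set φ1 := deriv φ with hφ1def
  set φ2 := deriv φ1 with hφ2def
  have hphiT : ContDiff ℝ (⊤ : ℕ∞) φ := hφ.of_le (by simp)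
  have hdφ : Differentiable ℝ φ := (contDiff_infty_iff_deriv.mp hphiT).1
  have hφ1smooth : ContDiff ℝ (⊤ : ℕ∞) φ1 := (contDiff_infty_iff_deriv.mp hphiT).2
  have hdφ1 : Differentiable ℝ φ1 := (contDiff_infty_iff_deriv.mp hφ1smooth).1
  have hφ2cont : Continuous φ2 := (contDiff_infty_iff_deriv.mp hφ1smooth).2.continuous
  set f1 := SchwartzMap.derivCLM ℝ ℝ f with hf1def
  set f2 := SchwartzMap.derivCLM ℝ ℝ f1 with hf2def
  set f3 := SchwartzMap.derivCLM ℝ ℝ f2 with hf3def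
  have h1f : deriv ⇑f = ⇑f1 := funext fun x => (SchwartzMap.derivCLM_apply (𝕜 := ℝ) f x).symm
  have h2f : deriv ⇑f1 = ⇑f2 := funext fun x => (SchwartzMap.derivCLM_apply (𝕜 := ℝ) f1 x).symm
  have h3f : deriv ⇑f2 = ⇑f3 := funext fun x => (SchwartzMap.derivCLM_apply (𝕜 := ℝ) f2 x).symm
  have hdf : ∀ x, HasDerivAt (⇑f) (f1 x) x := fun x => by
    have := f.differentiableAt.hasDerivAt (x := x); rwa [h1f] at this
  have hdf1 : ∀ x, HasDerivAt (⇑f1) (f2 x) x := fun x => by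
    have := f1.differentiableAt.hasDerivAt (x := x); rwa [h2f] at this
  have hdf2 : ∀ x, HasDerivAt (⇑f2) (f3 x) x := fun x => by
    have := f2.differentiableAt.hasDerivAt (x := x); rwa [h3f] at this
  have hM0 : 0 < M := lt_of_lt_of_le (hφpos 0) ((le_abs_self _).trans (hM 0))
  have hφleM : ∀ x, φ x ≤ M := fun x => (le_abs_self _).trans (hM x)
  have hφ2M : ∀ x, |φ2 x| ≤ lam * M := fun x =>
    (hφ2b x).trans (by nlinarith [hφleM x, hφpos x])
  -- linear growth of φ1
  have hφ1bd : ∀ x, |φ1 x| ≤ |φ1 0| + lam * M * |x| := by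
    intro x
    have hFTC : ∫ t in (0:ℝ)..x, φ2 t = φ1 x - φ1 0 :=
      intervalIntegral.integral_eq_sub_of_hasDerivAt
        (fun t _ => (hdφ1 t).hasDerivAt) (hφ2cont.intervalIntegrable 0 x)
    have hbound : ‖∫ t in (0:ℝ)..x, φ2 t‖ ≤ lam * M * |x - 0| :=
      intervalIntegral.norm_integral_le_of_norm_le_const (fun t _ => by
        rw [Real.norm_eq_abs]; exact hφ2M t)
    rw [hFTC, Real.norm_eq_abs, sub_zero] at hbound
    have := abs_sub_abs_le_abs_sub (φ1 x) (φ1 0)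
    linarith

  -- seminorm bounds
  set B1 := SchwartzMap.seminorm ℝ 0 0 f1 with hB1def
  set C1 := SchwartzMap.seminorm ℝ 1 0 f1 with hC1def
  set B2 := SchwartzMap.seminorm ℝ 0 0 f2 with hB2def
  have hB1 : ∀ x, |f1 x| ≤ B1 := fun x => by
    simpa [Real.norm_eq_abs] using SchwartzMap.norm_le_seminorm ℝ f1 x
  have hB2 : ∀ x, |f2 x| ≤ B2 := fun x => by
    simpa [Real.norm_eq_abs] using SchwartzMap.norm_le_seminorm ℝ f2 x
  have hC1 : ∀ x, |x| * |f1 x| ≤ C1 := fun x => by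
    simpa [Real.norm_eq_abs] using SchwartzMap.norm_pow_mul_le_seminorm ℝ f1 1 x
  have hB1n : 0 ≤ B1 := le_trans (abs_nonneg _) (hB1 0)
  -- integrability
  have hint2 : ∀ g h : SchwartzMap ℝ ℝ, Integrable (fun x => g x * h x) := fun g h =>
    h.integrable.bdd_mul g.continuous.aestronglyMeasurable
      (Eventually.of_forall fun x => SchwartzMap.norm_le_seminorm ℝ g x)
  have hintφ : ∀ g h : SchwartzMap ℝ ℝ, Integrable (fun x => φ x * (g x * h x)) := fun g h =>
    (hint2 g h).bdd_mul hφ.continuous.aestronglyMeasurable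
      (c := M) (Eventually.of_forall fun x => by rw [Real.norm_eq_abs]; exact hM x)
  have hintP : Integrable (fun x => φ2 x * (f1 x * f1 x)) :=
    (hint2 f1 f1).bdd_mul hφ2cont.aestronglyMeasurable
      (c := lam * M) (Eventually.of_forall fun x => by rw [Real.norm_eq_abs]; exact hφ2M x)
  set c0 := |φ1 0| with hc0def
  set K1 : ℝ := c0 * B1 + lam * M * C1 with hK1def
  have hkeybd : ∀ (g : SchwartzMap ℝ ℝ) x, |φ1 x * (f1 x * g x)| ≤ K1 * |g x| := by
    intro g x
    have h1 := hφ1bd x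
    have h2 := hB1 x
    have h3 := hC1 x
    have n0 : (0:ℝ) ≤ |g x| := abs_nonneg _
    have n1 : (0:ℝ) ≤ |f1 x| := abs_nonneg _
    have n2 : (0:ℝ) ≤ |x| := abs_nonneg _
    have n3 : (0:ℝ) ≤ |φ1 x| := abs_nonneg _
    have e : |φ1 x * (f1 x * g x)| = |φ1 x| * (|f1 x| * |g x|) := by
      rw [abs_mul, abs_mul]
    have hc0n : (0:ℝ) ≤ c0 := abs_nonneg _
    have hlmn : (0:ℝ) ≤ lam * M := mul_nonneg hlam.le hM0.le
    rw [e, hK1def]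
    calc |φ1 x| * (|f1 x| * |g x|)
        ≤ (c0 + lam * M * |x|) * (|f1 x| * |g x|) :=
          mul_le_mul_of_nonneg_right h1 (mul_nonneg n1 n0)
      _ = c0 * (|f1 x| * |g x|) + lam * M * ((|x| * |f1 x|) * |g x|) := by ring
      _ ≤ c0 * (B1 * |g x|) + lam * M * (C1 * |g x|) :=
          add_le_add (mul_le_mul_of_nonneg_left (mul_le_mul_of_nonneg_right h2 n0) hc0n)
            (mul_le_mul_of_nonneg_left (mul_le_mul_of_nonneg_right h3 n0) hlmn)
      _ = (c0 * B1 + lam * M * C1) * |g x| := by ring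
  have hintφ1 : Integrable (fun x => φ1 x * (f1 x * f2 x)) := by
    refine Integrable.mono' ((f2.integrable.norm).const_mul K1)
      ((hdφ1.continuous.mul (f1.continuous.mul f2.continuous)).aestronglyMeasurable) ?_
    exact Eventually.of_forall fun x => by
      rw [Real.norm_eq_abs, Real.norm_eq_abs]; exact hkeybd f2 x
  -- tendsto of boundary term
  have hf1top : Tendsto (⇑f1) atTop (𝓝 0) := (zero_at_infty f1).mono_left atTop_le_cocompact
  have hf1bot : Tendsto (⇑f1) atBot (𝓝 0) := (zero_at_infty f1).mono_left atBot_le_cocompact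
  set G : ℝ → ℝ := fun x => φ x * (f1 x * f2 x) - φ1 x * (f1 x * f1 x) / 2 with hGdef
  have hGbd : ∀ x, ‖G x‖ ≤ (M * B2 + K1 / 2) * |f1 x| := by
    intro x
    have h1 : |φ x * (f1 x * f2 x)| ≤ M * B2 * |f1 x| := by
      rw [abs_mul, abs_mul]
      calc |φ x| * (|f1 x| * |f2 x|)
          ≤ M * (|f1 x| * |f2 x|) :=
            mul_le_mul_of_nonneg_right (hM x) (mul_nonneg (abs_nonneg _) (abs_nonneg _))
        _ ≤ M * (|f1 x| * B2) :=
            mul_le_mul_of_nonneg_left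
              (mul_le_mul_of_nonneg_left (hB2 x) (abs_nonneg _)) hM0.le
        _ = M * B2 * |f1 x| := by ring
    have h2 : |φ1 x * (f1 x * f1 x) / 2| ≤ K1 * |f1 x| / 2 := by
      rw [abs_div]
      have := hkeybd f1 x
      rw [abs_of_pos (by norm_num : (0:ℝ) < 2)]
      exact (div_le_div_iff_of_pos_right (by norm_num : (0:ℝ) < 2)).mpr this
    calc ‖G x‖ ≤ |φ x * (f1 x * f2 x)| + |φ1 x * (f1 x * f1 x) / 2| := by
          rw [hGdef, Real.norm_eq_abs]; exact abs_sub _ _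
      _ ≤ M * B2 * |f1 x| + K1 * |f1 x| / 2 := add_le_add h1 h2
      _ = (M * B2 + K1 / 2) * |f1 x| := by ring
  have habs_top : Tendsto (fun x => (M * B2 + K1 / 2) * |f1 x|) atTop (𝓝 0) := by
    simpa using (hf1top.abs.const_mul (M * B2 + K1 / 2))
  have habs_bot : Tendsto (fun x => (M * B2 + K1 / 2) * |f1 x|) atBot (𝓝 0) := by
    simpa using (hf1bot.abs.const_mul (M * B2 + K1 / 2))
  have hGtop : Tendsto G atTop (𝓝 0) := squeeze_zero_norm hGbd habs_top
  have hGbot : Tendsto G atBot (𝓝 0) := squeeze_zero_norm hGbd habs_bot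
  -- derivative of G
  have hdφ' : ∀ x, HasDerivAt φ (φ1 x) x := fun x => (hdφ x).hasDerivAt
  have hdφ1' : ∀ x, HasDerivAt φ1 (φ2 x) x := fun x => (hdφ1 x).hasDerivAt
  have hGd : ∀ x, HasDerivAt G
      (φ x * (f2 x * f2 x) + φ x * (f1 x * f3 x) - φ2 x * (f1 x * f1 x) / 2) x := by
    intro x
    have hA := (hdφ' x).mul ((hdf1 x).mul (hdf2 x))
    have hB := ((hdφ1' x).mul ((hdf1 x).mul (hdf1 x))).div_const 2
    have h := hA.sub hB
    exact h.congr_deriv (by simp only [Pi.mul_apply]; ring)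
  have hintG' : Integrable (fun x =>
      φ x * (f2 x * f2 x) + φ x * (f1 x * f3 x) - φ2 x * (f1 x * f1 x) / 2) :=
    ((hintφ f2 f2).add (hintφ f1 f3)).sub (hintP.div_const 2)
  have hIBP : ∫ x, (φ x * (f2 x * f2 x) + φ x * (f1 x * f3 x) - φ2 x * (f1 x * f1 x) / 2) = 0 :=
    my_integral_deriv_eq_zero hGd hintG' hGtop hGbot
  simp only [integral_sub (show Integrable (fun x => φ x * (f2 x * f2 x) + φ x * (f1 x * f3 x))
        from (hintφ f2 f2).add (hintφ f1 f3))
        (show Integrable (fun x => φ2 x * (f1 x * f1 x) / 2) from hintP.div_const 2),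
      integral_add (hintφ f2 f2) (hintφ f1 f3), integral_div] at hIBP
  set A := ∫ x, φ x * (f1 x * f1 x) with hAdef
  set B := ∫ x, φ x * (f2 x * f2 x) with hBdef
  set D := ∫ x, φ x * (f3 x * f3 x) with hDdef
  set E := ∫ x, φ x * (f1 x * f3 x) with hEdef
  set P := ∫ x, φ2 x * (f1 x * f1 x) with hPdef
  have hsplit : B + E - P / 2 = 0 := hIBP
  have hA0 : 0 ≤ A := integral_nonneg fun x => mul_nonneg (hφpos x).le (mul_self_nonneg _)
  have hB0 : 0 ≤ B := integral_nonneg fun x => mul_nonneg (hφpos x).le (mul_self_nonneg _)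
  have hD0 : 0 ≤ D := integral_nonneg fun x => mul_nonneg (hφpos x).le (mul_self_nonneg _)
  have hPbd : |P| ≤ lam * A := by
    have h1 : |P| ≤ ∫ x, |φ2 x * (f1 x * f1 x)| := by
      rw [hPdef]
      have h := norm_integral_le_integral_norm (μ := volume) (fun x => φ2 x * (f1 x * f1 x))
      simpa only [Real.norm_eq_abs] using h
    have h2 : (∫ x, |φ2 x * (f1 x * f1 x)|) ≤ ∫ x, lam * (φ x * (f1 x * f1 x)) := by
      refine integral_mono hintP.abs ((hintφ f1 f1).const_mul lam) fun x => ?_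
      rw [abs_mul, abs_of_nonneg (mul_self_nonneg (f1 x))]
      calc |φ2 x| * (f1 x * f1 x)
          ≤ (lam * φ x) * (f1 x * f1 x) :=
            mul_le_mul_of_nonneg_right (hφ2b x) (mul_self_nonneg _)
        _ = lam * (φ x * (f1 x * f1 x)) := by ring
    have h3 : (∫ x, lam * (φ x * (f1 x * f1 x))) = lam * A := by
      rw [integral_const_mul, hAdef]
    linarith
  have huderiv : deriv u = fun x => f1 x - f3 x := by
    funext x
    have hx : HasDerivAt u (f1 x - f3 x) x := by
      have h := (hdf x).sub (hdf2 x)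
      apply h.congr_of_eventuallyEq
      exact Eventually.of_forall fun y => by rw [hu y, h1f, h2f, Pi.sub_apply]
    exact hx.deriv
  have hIeq : (∫ x, φ x * (deriv u x) ^ 2) = A - 2 * E + D := by
    simp only [huderiv]
    have e : (∫ x, φ x * (f1 x - f3 x) ^ 2) = ∫ x,
        (φ x * (f1 x * f1 x) - 2 * (φ x * (f1 x * f3 x)) + φ x * (f3 x * f3 x)) := by
      congr 1; funext x; ring
    rw [e]
    simp only [integral_add (show Integrable
          (fun x => φ x * (f1 x * f1 x) - 2 * (φ x * (f1 x * f3 x)))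
          from (hintφ f1 f1).sub ((hintφ f1 f3).const_mul 2)) (hintφ f3 f3),
        integral_sub (hintφ f1 f1) (show Integrable (fun x => 2 * (φ x * (f1 x * f3 x)))
          from (hintφ f1 f3).const_mul 2), integral_const_mul]
    rfl
  have hTeq : (∫ x, φ x * (d₁ * (f1 x) ^ 2 + d₂ * (f2 x) ^ 2 + d₃ * (f3 x) ^ 2))
      = d₁ * A + d₂ * B + d₃ * D := by
    have e : (∫ x, φ x * (d₁ * (f1 x) ^ 2 + d₂ * (f2 x) ^ 2 + d₃ * (f3 x) ^ 2)) = ∫ x,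
        (d₁ * (φ x * (f1 x * f1 x)) + d₂ * (φ x * (f2 x * f2 x))
          + d₃ * (φ x * (f3 x * f3 x))) := by
      congr 1; funext x; ring
    rw [e]
    simp only [integral_add (show Integrable (fun x => d₁ * (φ x * (f1 x * f1 x))
          + d₂ * (φ x * (f2 x * f2 x)))
          from ((hintφ f1 f1).const_mul d₁).add ((hintφ f2 f2).const_mul d₂))
        (show Integrable (fun x => d₃ * (φ x * (f3 x * f3 x)))
          from (hintφ f3 f3).const_mul d₃),
        integral_add (show Integrable (fun x => d₁ * (φ x * (f1 x * f1 x)))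
          from (hintφ f1 f1).const_mul d₁)
          (show Integrable (fun x => d₂ * (φ x * (f2 x * f2 x)))
          from (hintφ f2 f2).const_mul d₂),
        integral_const_mul]
    rfl
  simp only [h1f, h2f, h3f]
  rw [hIeq, hTeq]
  clear_value A B D E P
  exact ⟨my_arith1 d₁ d₂ d₃ lam A B D E P hd₁ hd₂ hd₃ hlam hlam2 hA0 hB0 hD0 hPbd
      (by linarith),
    my_arith2 d₁ d₂ d₃ lam A B D E P hd₁ hd₂ hd₃ hlam hlam2 hA0 hB0 hD0 hPbd
      (by linarith)⟩
end

section
/- Let a, c, α ∈ ℝ, let φ : ℝ → ℝ be smooth with all derivatives bounded, let f, g be Schwartz functions and set u := f − f'', η := g − g''. Define Q := ((1+c)(α−1) + 1/2)∫φ'η² − c(α + 1/2)∫φ'(∂_x η)² + ((1+a)(−α−1) + 1/2)∫φ'u² + a(α − 1/2)∫φ'(∂_x u)² + (1+c)(1−α)∫φ' η g + (1+a)(α+1)∫φ' u f. Then Q = ∫φ'( A₁f² + A₂(f')² + A₃(f'')² + A₄(f''')² ) + ∫φ'( B₁g² + B₂(g')² + B₃(g'')² + B₄(g''')² ) + ∫φ'''(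 D₁₁f² + D₁₂(f')² + D₂₁g² + D₂₂(g')² ), where A₁ = B₁ = 1/2, A₂ = −α − 3a/2, B₂ = α − 3c/2, A₃ = −(1−a)α − 2a − 1/2, B₃ = (1−c)α − 2c − 1/2, A₄ = a(α − 1/2), B₄ = −c(α + 1/2), D₁₁ = (1/2)(1+a)(α+1) − 1/2, D₁₂ = −a(α − 1/2), D₂₁ = (1/2)(1+c)(1−α) − 1/2, and D₂₂ = c(α + 1/2). -/
open MeasureTheory
open scoped ContDiff

structure Good (ψ : ℝ → ℝ) : Prop where
  smooth : ContDiff ℝ ∞ ψ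
  bdd : ∀ n : ℕ, ∃ M : ℝ, ∀ x : ℝ, |iteratedDeriv n ψ x| ≤ M

lemma Good.deriv' {ψ : ℝ → ℝ} (h : Good ψ) : Good (deriv ψ) := by
  refine ⟨(contDiff_infty_iff_deriv.mp h.smooth).2, fun n => ?_⟩
  obtain ⟨M, hM⟩ := h.bdd (n+1)
  exact ⟨M, fun x => by simpa [iteratedDeriv_succ'] using hM x⟩

lemma Good.bound0 {ψ : ℝ → ℝ} (h : Good ψ) : ∃ C, ∀ x, ‖ψ x‖ ≤ C := by
  obtain ⟨M, hM⟩ := h.bdd 0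
  exact ⟨M, fun x => by simpa [Real.norm_eq_abs] using hM x⟩

lemma Good.hasDerivAt {ψ : ℝ → ℝ} (h : Good ψ) (x : ℝ) : HasDerivAt ψ (deriv ψ x) x :=
  (h.smooth.differentiable (by simp) x).hasDerivAt

lemma schwartz_bound (w : SchwartzMap ℝ ℝ) : ∃ C, ∀ x, ‖w x‖ ≤ C := by
  obtain ⟨C, hC⟩ := w.decay 0 0
  exact ⟨C, fun x => by simpa using hC.2 x⟩

lemma integrable_mul3 {ψ : ℝ → ℝ} (h : Good ψ) (w₁ w₂ : SchwartzMap ℝ ℝ) :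
    Integrable (fun x => ψ x * (w₁ x * w₂ x)) := by
  have h1 : Integrable (fun x => w₁ x * w₂ x) := by
    obtain ⟨C, hC⟩ := schwartz_bound w₁
    exact (w₂.integrable).bdd_mul w₁.continuous.aestronglyMeasurable (Filter.Eventually.of_forall hC)
  obtain ⟨C, hC⟩ := h.bound0
  exact h1.bdd_mul h.smooth.continuous.aestronglyMeasurable (Filter.Eventually.of_forall hC)

lemma integrable_sq {ψ : ℝ → ℝ} (h : Good ψ) (w : SchwartzMap ℝ ℝ) :
    Integrable (fun x => ψ x * (w x)^2) := by
  simpa [pow_two] using integrable_mul3 h w w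

lemma ibpA {ψ : ℝ → ℝ} (hψ : Good ψ) (w w1 : SchwartzMap ℝ ℝ) (hw1 : deriv ⇑w = ⇑w1) :
    ∫ x, ψ x * (w x * w1 x) = -(1/2) * ∫ x, deriv ψ x * (w x)^2 := by
  have hv : ∀ x : ℝ, HasDerivAt (fun y => (w y)^2) (2 * w x * w1 x) x := by
    intro x
    have h0 : HasDerivAt (⇑w) (w1 x) x := by
      have h1 : HasDerivAt (⇑w) (deriv ⇑w x) x := (w.differentiableAt (x := x)).hasDerivAt
      rwa [hw1] at h1
    have h2 : HasDerivAt (fun y => (w y)^2) _ x := h0.pow 2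
    convert h2 using 1
    push_cast
    ring
  have e1 : (ψ * fun x => 2 * w x * w1 x) = fun x => 2 * (ψ x * (w x * w1 x)) := by
    funext x; simp only [Pi.mul_apply]; ring
  have e2 : (deriv ψ * fun x => (w x)^2) = fun x => deriv ψ x * (w x)^2 := rfl
  have e3 : (ψ * fun x => (w x)^2) = fun x => ψ x * (w x)^2 := rfl
  have key := integral_mul_deriv_eq_deriv_mul_of_integrable (fun x _ => hψ.hasDerivAt x) (fun x _ => hv x)
    (by rw [e1]; exact (integrable_mul3 hψ w w1).const_mul 2)
    (by rw [e2]; exact integrable_sq hψ.deriv' w)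
    (by rw [e3]; exact integrable_sq hψ w)
  have e4 : (fun x => ψ x * (2 * w x * w1 x)) = fun x => 2 * (ψ x * (w x * w1 x)) := by
    funext x; ring
  rw [e4, integral_const_mul] at key
  linarith [key]

lemma ibpB {ψ : ℝ → ℝ} (hψ : Good ψ) (w w1 w2 : SchwartzMap ℝ ℝ)
    (hw1 : deriv ⇑w = ⇑w1) (hw2 : deriv ⇑w1 = ⇑w2) :
    ∫ x, ψ x * (w x * w2 x)
      = (1/2) * (∫ x, deriv (deriv ψ) x * (w x)^2) - ∫ x, ψ x * (w1 x)^2 := by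
  have hu : ∀ x : ℝ, HasDerivAt (fun y => ψ y * w y) (deriv ψ x * w x + ψ x * w1 x) x := by
    intro x
    have := (hψ.hasDerivAt x).mul (w.differentiableAt.hasDerivAt)
    rwa [hw1] at this
  have hv : ∀ x : ℝ, HasDerivAt (⇑w1) (w2 x) x := by
    intro x
    have := w1.differentiableAt.hasDerivAt (x := x)
    rwa [hw2] at this
  have i1 : Integrable ((fun y => ψ y * w y) * ⇑w2) := by
    have : ((fun y => ψ y * w y) * ⇑w2) = fun x => ψ x * (w x * w2 x) := by
      funext x; simp [Pi.mul_apply]; ring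
    rw [this]; exact integrable_mul3 hψ w w2
  have i2 : Integrable ((fun x => deriv ψ x * w x + ψ x * w1 x) * ⇑w1) := by
    have : ((fun x => deriv ψ x * w x + ψ x * w1 x) * ⇑w1)
        = fun x => deriv ψ x * (w x * w1 x) + ψ x * (w1 x * w1 x) := by
      funext x; simp [Pi.mul_apply]; ring
    rw [this]; exact (integrable_mul3 hψ.deriv' w w1).add (integrable_mul3 hψ w1 w1)
  have i3 : Integrable ((fun y => ψ y * w y) * ⇑w1) := by
    have : ((fun y => ψ y * w y) * ⇑w1) = fun x => ψ x * (w x * w1 x) := by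
      funext x; simp [Pi.mul_apply]; ring
    rw [this]; exact integrable_mul3 hψ w w1
  have key := integral_mul_deriv_eq_deriv_mul_of_integrable (fun x _ => hu x) (fun x _ => hv x) i1 i2 i3
  -- key : ∫ x, (ψ x * w x) * w2 x = -∫ x, (deriv ψ x * w x + ψ x * w1 x) * w1 x
  have e1 : (fun x => ψ x * w x * w2 x) = fun x => ψ x * (w x * w2 x) := by funext x; ring
  have e2 : (fun x => (deriv ψ x * w x + ψ x * w1 x) * w1 x)
      = fun x => deriv ψ x * (w x * w1 x) + ψ x * (w1 x)^2 := by funext x; ring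
  rw [e1, e2, integral_add (integrable_mul3 hψ.deriv' w w1) (integrable_sq hψ w1)] at key
  rw [ibpA hψ.deriv' w w1 hw1] at key
  rw [key]; ring

lemma expand4 {ψ : ℝ → ℝ} (hψ : Good ψ) (c₁ c₂ c₃ c₄ : ℝ) (w₀ w₁ w₂ w₃ : SchwartzMap ℝ ℝ) :
    (∫ x, ψ x * (c₁ * (w₀ x)^2 + c₂ * (w₁ x)^2 + c₃ * (w₂ x)^2 + c₄ * (w₃ x)^2))
      = c₁ * (∫ x, ψ x * (w₀ x)^2) + c₂ * (∫ x, ψ x * (w₁ x)^2)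
        + c₃ * (∫ x, ψ x * (w₂ x)^2) + c₄ * (∫ x, ψ x * (w₃ x)^2) := by
  have J0 : Integrable (fun x => c₁ * (ψ x * (w₀ x)^2)) volume := (integrable_sq hψ w₀).const_mul c₁
  have J1 : Integrable (fun x => c₂ * (ψ x * (w₁ x)^2)) volume := (integrable_sq hψ w₁).const_mul c₂
  have J2 : Integrable (fun x => c₃ * (ψ x * (w₂ x)^2)) volume := (integrable_sq hψ w₂).const_mul c₃
  have J3 : Integrable (fun x => c₄ * (ψ x * (w₃ x)^2)) volume := (integrable_sq hψ w₃).const_mul c₄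
  have J01 : Integrable (fun x => c₁ * (ψ x * (w₀ x)^2) + c₂ * (ψ x * (w₁ x)^2)) volume := J0.add J1
  have J012 : Integrable (fun x => c₁ * (ψ x * (w₀ x)^2) + c₂ * (ψ x * (w₁ x)^2)
      + c₃ * (ψ x * (w₂ x)^2)) volume := J01.add J2
  have e : (fun x => ψ x * (c₁ * (w₀ x)^2 + c₂ * (w₁ x)^2 + c₃ * (w₂ x)^2 + c₄ * (w₃ x)^2))
      = fun x => c₁ * (ψ x * (w₀ x)^2) + c₂ * (ψ x * (w₁ x)^2) + c₃ * (ψ x * (w₂ x)^2)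
          + c₄ * (ψ x * (w₃ x)^2) := by funext x; ring
  rw [e, integral_add J012 J3, integral_add J01 J2, integral_add J0 J1,
    integral_const_mul, integral_const_mul, integral_const_mul, integral_const_mul]

lemma expand_sub_sq {ψ : ℝ → ℝ} (hψ : Good ψ) (w v : SchwartzMap ℝ ℝ) :
    (∫ x, ψ x * (w x - v x)^2)
      = (∫ x, ψ x * (w x)^2) - 2 * (∫ x, ψ x * (w x * v x)) + (∫ x, ψ x * (v x)^2) := by
  have I0 := integrable_sq hψ w
  have I1 : Integrable (fun x => 2 * (ψ x * (w x * v x))) volume :=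
    (integrable_mul3 hψ w v).const_mul 2
  have I2 := integrable_sq hψ v
  have I01 : Integrable (fun x => ψ x * (w x)^2 - 2 * (ψ x * (w x * v x))) volume := I0.sub I1
  have e : (fun x => ψ x * (w x - v x)^2)
      = fun x => (ψ x * (w x)^2 - 2 * (ψ x * (w x * v x))) + ψ x * (v x)^2 := by
    funext x; ring
  rw [e, integral_add I01 I2, integral_sub I0 I1, integral_const_mul]

lemma expand_sub_mul {ψ : ℝ → ℝ} (hψ : Good ψ) (w v : SchwartzMap ℝ ℝ) :
    (∫ x, ψ x * ((w x - v x) * w x))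
      = (∫ x, ψ x * (w x)^2) - ∫ x, ψ x * (w x * v x) := by
  have I0 := integrable_sq hψ w
  have I1 := integrable_mul3 hψ w v
  have e : (fun x => ψ x * ((w x - v x) * w x))
      = fun x => ψ x * (w x)^2 - ψ x * (w x * v x) := by funext x; ring
  rw [e, integral_sub I0 I1]


/-- Canonical-variable decomposition of the quadratic form `Q`
(Lemma 3.4 of the paper): with `u = f - f''` and `η = g - g''`,
the quadratic form `Q` equals the stated combination of weighted integrals of
`f, f', f'', f'''` and `g, g', g'', g'''`. -/
theorem stmt_14 (a c α : ℝ) (φ : ℝ → ℝ) (hφ : ContDiff ℝ (⊤ : ℕ∞) φ)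
    (hφbd : ∀ n : ℕ, ∃ M : ℝ, ∀ x : ℝ, |iteratedDeriv n φ x| ≤ M)
    (f g : SchwartzMap ℝ ℝ) (u η : ℝ → ℝ)
    (hu : ∀ x : ℝ, u x = f x - deriv (deriv ⇑f) x)
    (hη : ∀ x : ℝ, η x = g x - deriv (deriv ⇑g) x) :
    ((1 + c) * (α - 1) + 1 / 2) * (∫ x : ℝ, deriv φ x * (η x) ^ 2)
      - c * (α + 1 / 2) * (∫ x : ℝ, deriv φ x * (deriv η x) ^ 2)
      + ((1 + a) * (-α - 1) + 1 / 2) * (∫ x : ℝ, deriv φ x * (u x) ^ 2)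
      + a * (α - 1 / 2) * (∫ x : ℝ, deriv φ x * (deriv u x) ^ 2)
      + (1 + c) * (1 - α) * (∫ x : ℝ, deriv φ x * (η x * g x))
      + (1 + a) * (α + 1) * (∫ x : ℝ, deriv φ x * (u x * f x))
    =
    (∫ x : ℝ, deriv φ x *
        ((1 / 2) * (f x) ^ 2 + (-α - 3 * a / 2) * (deriv ⇑f x) ^ 2
          + (-(1 - a) * α - 2 * a - 1 / 2) * (deriv (deriv ⇑f) x) ^ 2
          + (a * (α - 1 / 2)) * (deriv (deriv (deriv ⇑f)) x) ^ 2))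
      + (∫ x : ℝ, deriv φ x *
          ((1 / 2) * (g x) ^ 2 + (α - 3 * c / 2) * (deriv ⇑g x) ^ 2
            + ((1 - c) * α - 2 * c - 1 / 2) * (deriv (deriv ⇑g) x) ^ 2
            + (-c * (α + 1 / 2)) * (deriv (deriv (deriv ⇑g)) x) ^ 2))
      + (∫ x : ℝ, deriv (deriv (deriv φ)) x *
          (((1 / 2) * (1 + a) * (α + 1) - 1 / 2) * (f x) ^ 2
            + (-a * (α - 1 / 2)) * (deriv ⇑f x) ^ 2
            + ((1 / 2) * (1 + c) * (1 - α) - 1 / 2) * (g x) ^ 2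
            + (c * (α + 1 / 2)) * (deriv ⇑g x) ^ 2)) := by
  have hGφ : Good φ := ⟨hφ.of_le (by simp), hφbd⟩
  have hφ1 : Good (deriv φ) := hGφ.deriv'
  have hφ3 : Good (deriv (deriv (deriv φ))) := hGφ.deriv'.deriv'.deriv'
  set F1 : SchwartzMap ℝ ℝ := SchwartzMap.derivCLM ℝ ℝ f with hF1def
  set F2 : SchwartzMap ℝ ℝ := SchwartzMap.derivCLM ℝ ℝ F1 with hF2def
  set F3 : SchwartzMap ℝ ℝ := SchwartzMap.derivCLM ℝ ℝ F2 with hF3def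
  set G1 : SchwartzMap ℝ ℝ := SchwartzMap.derivCLM ℝ ℝ g with hG1def
  set G2 : SchwartzMap ℝ ℝ := SchwartzMap.derivCLM ℝ ℝ G1 with hG2def
  set G3 : SchwartzMap ℝ ℝ := SchwartzMap.derivCLM ℝ ℝ G2 with hG3def
  have hF1 : deriv ⇑f = ⇑F1 := funext fun x => (SchwartzMap.derivCLM_apply (𝕜 := ℝ) f x).symm
  have hF2 : deriv ⇑F1 = ⇑F2 := funext fun x => (SchwartzMap.derivCLM_apply (𝕜 := ℝ) F1 x).symm
  have hF3 : deriv ⇑F2 = ⇑F3 := funext fun x => (SchwartzMap.derivCLM_apply (𝕜 := ℝ) F2 x).symm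
  have hG1 : deriv ⇑g = ⇑G1 := funext fun x => (SchwartzMap.derivCLM_apply (𝕜 := ℝ) g x).symm
  have hG2 : deriv ⇑G1 = ⇑G2 := funext fun x => (SchwartzMap.derivCLM_apply (𝕜 := ℝ) G1 x).symm
  have hG3 : deriv ⇑G2 = ⇑G3 := funext fun x => (SchwartzMap.derivCLM_apply (𝕜 := ℝ) G2 x).symm
  have hd2f : deriv (deriv ⇑f) = ⇑F2 := by rw [hF1, hF2]
  have hd3f : deriv (deriv (deriv ⇑f)) = ⇑F3 := by rw [hF1, hF2, hF3]
  have hd2g : deriv (deriv ⇑g) = ⇑G2 := by rw [hG1, hG2]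
  have hd3g : deriv (deriv (deriv ⇑g)) = ⇑G3 := by rw [hG1, hG2, hG3]
  have huu : u = fun x => f x - F2 x := funext fun x => by rw [hu x, hd2f]
  have hηη : η = fun x => g x - G2 x := funext fun x => by rw [hη x, hd2g]
  have hdu : deriv u = fun x => F1 x - F3 x := by
    rw [huu]; funext x
    rw [deriv_fun_sub f.differentiableAt F2.differentiableAt, hF1, hF3]
  have hdη : deriv η = fun x => G1 x - G3 x := by
    rw [hηη]; funext x
    rw [deriv_fun_sub g.differentiableAt G2.differentiableAt, hG1, hG3]
  simp only [hdu, hdη]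
  simp only [huu, hηη, hF1, hF2, hF3, hG1, hG2, hG3]
  rw [expand_sub_sq hφ1 g G2, expand_sub_sq hφ1 G1 G3, expand_sub_sq hφ1 f F2,
    expand_sub_sq hφ1 F1 F3, expand_sub_mul hφ1 g G2, expand_sub_mul hφ1 f F2,
    expand4 hφ1 (1/2) (-α - 3*a/2) (-(1-a)*α - 2*a - 1/2) (a*(α - 1/2)) f F1 F2 F3,
    expand4 hφ1 (1/2) (α - 3*c/2) ((1-c)*α - 2*c - 1/2) (-c*(α + 1/2)) g G1 G2 G3,
    expand4 hφ3 ((1/2)*(1+a)*(α+1) - 1/2) (-a*(α - 1/2)) ((1/2)*(1+c)*(1-α) - 1/2)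
      (c*(α + 1/2)) f F1 g G1,
    ibpB hφ1 f F1 F2 hF1 hF2, ibpB hφ1 F1 F2 F3 hF2 hF3,
    ibpB hφ1 g G1 G2 hG1 hG2, ibpB hφ1 G1 G2 G3 hG2 hG3]
  ring
end
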